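/- For any odd prime K, the sum over β from -K to K-1 of exp(iπβ²/(2K)) equals the integral over all real β of exp(iπβ²/(2K)); explicitly, ∑_{β=-K}^{K-1} e^{iπβ²/(2K)} = √(2K) · e^{iπ/4}. -/

import Mathlib

/-!
Evaluate `θ(τ) = ∑ₙ e^{πin²τ}` near the cusp `1/(2K)`, at `τ = (1 + iu)/(2K)` with `u → 0⁺`,
in two ways. Splitting `n` into residue classes `r` mod `2K` and applying the Jacobi functional
equation to each class gives `√(2Ku) θ(τ) → ∑_r e^{πir²/(2K)}`, since each class contributes
`e^{πir²/(2K)} θ(r/(2K), i/(2Ku)) / √(2Ku)`. Applying the functional equation to `θ` itself,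
shifting by the period `2K`, and applying it once more sends `τ` to `-1/(2K) + i/(2Ku)`, which
tends to the cusp at infinity where `θ → 1`; this gives
`√(2Ku) θ(τ) → (-i/(2K))^{-1/2} = √(2K) e^{iπ/4}`.
-/

open Complex Real

open Filter Topology

theorem Complex.ofReal_mul_cpow {r : ℝ} (hr : 0 ≤ r) (z c : ℂ) :
    ((r : ℂ) * z) ^ c = (r : ℂ) ^ c * z ^ c := by
  rcases hr.eq_or_lt with rfl | hr
  · rcases eq_or_ne c 0 with rfl | hc <;> simp [*]
  rcases eq_or_ne z 0 with rfl | hz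
  · rcases eq_or_ne c 0 with rfl | hc <;> simp [*]
  have hr' : (r : ℂ) ≠ 0 := ofReal_ne_zero.mpr hr.ne'
  rw [cpow_def_of_ne_zero (mul_ne_zero hr' hz), cpow_def_of_ne_zero hr', cpow_def_of_ne_zero hz,
    log_ofReal_mul hr hz, ofReal_log hr.le, add_mul, exp_add]

noncomputable def Int.equivIcoProd (a : ℤ) {N : ℤ} (hN : 0 < N) : ℤ ≃ Finset.Ico a (a + N) × ℤ where
  toFun n := (⟨toIcoMod hN a n, by simpa using toIcoMod_mem_Ico hN a n⟩, toIcoDiv hN a n)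
  invFun p := p.1 + p.2 * N
  left_inv n := by simpa using toIcoMod_add_toIcoDiv_zsmul hN a n
  right_inv := by
    rintro ⟨⟨r, hr⟩, m⟩
    have hr' : r ∈ Set.Ico a (a + N) := by simpa using hr
    have hmod : toIcoMod hN a (r + m * N) = r := (toIcoMod_eq_iff hN).2 ⟨hr', m, rfl⟩
    have hdiv : toIcoDiv hN a (r + m * N) = m := (toIcoDiv_eq_iff hN).2 (by simpa using hr')
    ext <;> simp [hmod, hdiv]

theorem jacobiTheta₂_eq_sum_Ico (a : ℤ) {N : ℕ} (hN : 0 < N) (z τ : ℂ) :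
    jacobiTheta₂ z τ = ∑ r ∈ Finset.Ico a (a + N),
      jacobiTheta₂_term r z τ * jacobiTheta₂ (N * (z + r * τ)) (N ^ 2 * τ) := by
  rcases le_or_gt τ.im 0 with hτ | hτ
  · have hτ' : (N ^ 2 * τ : ℂ).im ≤ 0 := by
      rw [← ofReal_natCast, ← ofReal_pow, im_ofReal_mul]
      exact mul_nonpos_of_nonneg_of_nonpos (by positivity) hτ
    simp only [jacobiTheta₂_undef _ hτ, jacobiTheta₂_undef _ hτ', mul_zero, Finset.sum_const_zero]
  have hNτ : 0 < (N ^ 2 * τ : ℂ).im := by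
    rw [← ofReal_natCast, ← ofReal_pow, im_ofReal_mul]
    positivity
  have hterm (r m : ℤ) : jacobiTheta₂_term (r + m * N) z τ =
      jacobiTheta₂_term r z τ * jacobiTheta₂_term m (N * (z + r * τ)) (N ^ 2 * τ) := by
    simp only [jacobiTheta₂_term, ← Complex.exp_add]
    congr 1
    push_cast
    ring
  have hsum : HasSum (fun p : Finset.Ico a (a + N) × ℤ => jacobiTheta₂_term p.1 z τ *
      jacobiTheta₂_term p.2 (N * (z + p.1 * τ)) (N ^ 2 * τ)) (jacobiTheta₂ z τ) := by
    set e := Int.equivIcoProd a (Int.natCast_pos.mpr hN)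
    refine e.hasSum_iff.mp ?_
    convert hasSum_jacobiTheta₂_term z hτ using 1
    funext n
    rw [Function.comp_apply, ← hterm]
    exact congrArg (jacobiTheta₂_term · z τ) (e.symm_apply_apply n)
  have hfib (r : Finset.Ico a (a + N)) :=
    (hasSum_jacobiTheta₂_term (N * (z + r * τ)) hNτ).mul_left (jacobiTheta₂_term r z τ)
  rw [← Finset.sum_coe_sort]
  exact (hsum.prod_fiberwise hfib).unique (hasSum_fintype _)

theorem jacobiTheta₂_I_mul_functional_equation (x s : ℂ) (hs : s ≠ 0) :
    jacobiTheta₂ (I * x * s) (I * s) =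
      (s ^ (1 / 2 : ℂ))⁻¹ * cexp (π * x ^ 2 * s) * jacobiTheta₂ x (I / s) := by
  have hτ : -I * (I * s) = s := by ring_nf; rw [I_sq]; ring
  have hexp : -π * I * (I * x * s) ^ 2 / (I * s) = π * x ^ 2 * s := by
    field_simp; ring_nf; rw [I_sq]; ring
  have hz : I * x * s / (I * s) = x := by field_simp
  have hS : -1 / (I * s) = I / s := by field_simp; ring_nf; rw [I_sq]
  rw [jacobiTheta₂_functional_equation, hτ, hexp, hz, hS, one_div]

theorem jacobiTheta₂_zero_I_mul {σ : ℂ} (hσ : σ ≠ 0) :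
    jacobiTheta₂ 0 (I * σ) = (σ ^ (1 / 2 : ℂ))⁻¹ * jacobiTheta₂ 0 (I / σ) := by
  simpa using jacobiTheta₂_I_mul_functional_equation 0 σ hσ

theorem jacobiTheta₂_add_int (z τ : ℂ) (m : ℤ) : jacobiTheta₂ (z + m) τ = jacobiTheta₂ z τ := by
  simpa using (Function.Periodic.int_mul (f := (jacobiTheta₂ · τ)) (jacobiTheta₂_add_left · τ) m) z

theorem jacobiTheta₂_add_two_mul_nat (z τ : ℂ) (k : ℕ) :
    jacobiTheta₂ z (τ + 2 * k) = jacobiTheta₂ z τ := by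
  rw [mul_comm]; exact (Function.Periodic.nat_mul (jacobiTheta₂_add_right z) k) τ

theorem tendsto_jacobiTheta₂_comap_im_atTop (z : ℂ) :
    Tendsto (jacobiTheta₂ z) (comap im atTop) (𝓝 1) := by
  have hterm (n : ℤ) : Tendsto (jacobiTheta₂_term n z) (comap im atTop)
      (𝓝 (if n = 0 then 1 else 0)) := by
    split_ifs with hn
    · exact tendsto_const_nhds.congr fun τ => by simp [hn, jacobiTheta₂_term]
    rw [tendsto_zero_iff_norm_tendsto_zero]
    simp only [norm_jacobiTheta₂_term]
    have hn2 : -π * n ^ 2 < 0 := by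
      have : (0 : ℝ) < n ^ 2 := by positivity
      nlinarith [pi_pos]
    refine tendsto_exp_atBot.comp (tendsto_atBot_add_const_right _ _ ?_)
    exact tendsto_comap.const_mul_atTop_of_neg hn2
  have hbound : ∀ᶠ τ in comap im atTop, ∀ n : ℤ,
      ‖jacobiTheta₂_term n z τ‖ ≤ rexp (-π * (1 * n ^ 2 - 2 * |z.im| * |n|)) :=
    (tendsto_comap.eventually_ge_atTop 1).mono fun τ hτ =>
      norm_jacobiTheta₂_term_le one_pos le_rfl hτ
  show Tendsto (fun τ => ∑' n : ℤ, jacobiTheta₂_term n z τ) _ _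
  simpa using tendsto_tsum_of_dominated_convergence
    (by simpa using summable_pow_mul_jacobiTheta₂_term_bound |z.im| one_pos 0) hterm hbound

theorem tendsto_add_I_div_mul_nhdsGT_zero (a : ℂ) {c : ℝ} (hc : 0 < c) :
    Tendsto (fun u : ℝ => a + I / (c * u)) (𝓝[>] 0) (comap im atTop) := by
  rw [tendsto_comap_iff]
  have him : im ∘ (fun u : ℝ => a + I / (c * u)) = fun u => a.im + c⁻¹ * u⁻¹ := by
    funext u
    rw [Function.comp_apply, add_im, ← ofReal_mul, div_ofReal_im, I_im, one_div, mul_inv]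
  rw [him]
  exact tendsto_atTop_add_const_left _ _ (tendsto_inv_nhdsGT_zero.const_mul_atTop (inv_pos.mpr hc))

theorem inv_cpow_half_neg_I_div {x : ℝ} (hx : 0 < x) :
    ((-I / x) ^ (1 / 2 : ℂ))⁻¹ = √x * cexp (I * π / 4) := by
  have hnegI : (-I) ^ (1 / 2 : ℂ) = cexp (-(I * π / 4)) := by
    rw [cpow_def_of_ne_zero (neg_ne_zero.mpr I_ne_zero), log_neg_I]
    ring_nf
  have hsqrt : ((x⁻¹ : ℝ) : ℂ) ^ (1 / 2 : ℂ) = ((√x)⁻¹ : ℝ) := by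
    rw [Real.sqrt_eq_rpow, ← Real.inv_rpow hx.le, ofReal_cpow (inv_nonneg.mpr hx.le)]
    norm_num
  rw [show -I / x = ((x⁻¹ : ℝ) : ℂ) * (-I) by push_cast; ring, ofReal_mul_cpow (by positivity),
    hsqrt, hnegI, mul_inv, Complex.exp_neg, inv_inv, ofReal_inv, inv_inv]

noncomputable def scaledTheta (K : ℕ) (u : ℝ) : ℂ :=
  ((2 * K * u : ℝ) : ℂ) ^ (1 / 2 : ℂ) * jacobiTheta₂ 0 ((1 + u * I) / (2 * K))

theorem scaledTheta_eq_sum {K : ℕ} (hK : K ≠ 0) {u : ℝ} (hu : u ≠ 0) :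
    scaledTheta K u =
      ∑ r ∈ Finset.Ico (-(K : ℤ)) K,
        cexp (I * π * r ^ 2 / (2 * K)) * jacobiTheta₂ (r / (2 * K)) (I / (2 * K * u)) := by
  unfold scaledTheta
  set s : ℂ := ((2 * K * u : ℝ) : ℂ)
  have hs : s ≠ 0 := by simp [s, hK, hu]
  have hsqrt : s ^ (1 / 2 : ℂ) ≠ 0 := by simp [cpow_eq_zero_iff, hs]
  have hIco : -(K : ℤ) + ((2 * K : ℕ) : ℤ) = K := by push_cast; ring
  rw [jacobiTheta₂_eq_sum_Ico (-K) (N := 2 * K) (by positivity), hIco, Finset.mul_sum]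
  refine Finset.sum_congr rfl fun r _ => ?_
  have hz : ((2 * K : ℕ) : ℂ) * (0 + r * ((1 + u * I) / (2 * K))) = I * (r / (2 * K)) * s + r := by
    simp only [s]; push_cast; field_simp; ring
  have hτ : ((2 * K : ℕ) : ℂ) ^ 2 * ((1 + u * I) / (2 * K)) = I * s + 2 * K := by
    simp only [s]; push_cast; field_simp; ring
  have hexp : 2 * π * I * r * 0 + π * I * r ^ 2 * ((1 + u * I) / (2 * K)) +
      π * (r / (2 * K)) ^ 2 * s = I * π * r ^ 2 / (2 * K) := by
    simp only [s]; push_cast; field_simp; ring_nf; rw [I_sq]; ring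
  have hIs : I / s = I / (2 * K * u) := by simp [s]
  rw [hz, hτ, jacobiTheta₂_add_two_mul_nat, jacobiTheta₂_add_int,
    jacobiTheta₂_I_mul_functional_equation _ _ hs, hIs, jacobiTheta₂_term, ← hexp,
    Complex.exp_add _ (π * _ * s), mul_left_comm, mul_assoc _⁻¹, mul_inv_cancel_left₀ hsqrt,
    mul_assoc (cexp _)]

theorem scaledTheta_eq_mul_jacobiTheta₂ {K : ℕ} (hK : K ≠ 0) {u : ℝ} (hu : 0 < u) :
    scaledTheta K u =
      (((u - I) / (2 * K)) ^ (1 / 2 : ℂ))⁻¹ * (((1 + u * I)⁻¹) ^ (1 / 2 : ℂ))⁻¹ *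
        jacobiTheta₂ 0 (-1 / (2 * K) + I / (2 * K * u)) := by
  have hKc : (K : ℂ) ≠ 0 := Nat.cast_ne_zero.mpr hK
  have huc : (u : ℂ) ≠ 0 := ofReal_ne_zero.mpr hu.ne'
  have hs : ((2 * K * u : ℝ) : ℂ) ^ (1 / 2 : ℂ) ≠ 0 := by simp [cpow_eq_zero_iff, hK, hu.ne']
  have h1u : 1 + u * I ≠ 0 := fun h => by simpa using congrArg re h
  have h1u' : 1 + I * u ≠ 0 := by rwa [mul_comm]
  have huI : (u : ℂ) - I ≠ 0 := fun h => by simpa using congrArg im h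
  have hτ : (1 + u * I) / (2 * K) = I * ((u - I) / (2 * K)) := by
    field_simp; ring_nf; rw [I_sq]; ring
  have hshift : I / ((u - I) / (2 * K)) + 2 * K = I * ((2 * K * u : ℝ) * (1 + u * I)⁻¹) := by
    push_cast; field_simp; ring_nf; rw [I_sq]; ring
  have hcusp : I / ((2 * K * u : ℝ) * (1 + u * I)⁻¹) = -1 / (2 * K) + I / (2 * K * u) := by
    push_cast; field_simp; ring_nf; rw [I_sq]; ring
  rw [scaledTheta, hτ, jacobiTheta₂_zero_I_mul (by simp [hKc, huI]),
    ← jacobiTheta₂_add_two_mul_nat _ _ K, hshift,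
    jacobiTheta₂_zero_I_mul (by simp [hK, hu.ne', h1u]), hcusp,
    ofReal_mul_cpow (by positivity), mul_inv]
  field_simp

theorem tendsto_scaledTheta_sum {K : ℕ} (hK : K ≠ 0) :
    Tendsto (scaledTheta K) (𝓝[>] 0)
      (𝓝 (∑ r ∈ Finset.Ico (-(K : ℤ)) K, cexp (I * π * r ^ 2 / (2 * K)))) := by
  have hK' : (0 : ℝ) < 2 * K := by positivity
  have hθ (r : ℤ) : Tendsto (fun u : ℝ => jacobiTheta₂ (r / (2 * K)) (I / (2 * K * u))) (𝓝[>] 0)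
      (𝓝 1) := by
    simpa [Function.comp_def] using (tendsto_jacobiTheta₂_comap_im_atTop _).comp
      (tendsto_add_I_div_mul_nhdsGT_zero 0 hK')
  have hsum := tendsto_finsetSum (Finset.Ico (-(K : ℤ)) K) fun r _ =>
    (hθ r).const_mul (cexp (I * π * r ^ 2 / (2 * K)))
  simp only [mul_one] at hsum
  refine hsum.congr' ?_
  filter_upwards [self_mem_nhdsWithin] with u hu
  exact (scaledTheta_eq_sum hK (ne_of_gt hu)).symm

theorem tendsto_scaledTheta_sqrt_mul_exp {K : ℕ} (hK : K ≠ 0) :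
    Tendsto (scaledTheta K) (𝓝[>] 0) (𝓝 (√(2 * K) * cexp (I * π / 4))) := by
  have hK' : (0 : ℝ) < 2 * K := by positivity
  have hA : Tendsto (fun u : ℝ => (((u : ℂ) - I) / (2 * K)) ^ (1 / 2 : ℂ)) (𝓝[>] 0)
      (𝓝 ((-I / (2 * K)) ^ (1 / 2 : ℂ))) := by
    have : ContinuousAt (fun u : ℝ => (((u : ℂ) - I) / (2 * K)) ^ (1 / 2 : ℂ)) 0 := by
      refine ContinuousAt.cpow (by fun_prop) continuousAt_const ?_
      exact Or.inr (by simp [div_im, hK])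
    simpa using this.tendsto.mono_left nhdsWithin_le_nhds
  have hB : Tendsto (fun u : ℝ => ((1 + u * I)⁻¹) ^ (1 / 2 : ℂ)) (𝓝[>] 0) (𝓝 1) := by
    have : ContinuousAt (fun u : ℝ => ((1 + u * I)⁻¹) ^ (1 / 2 : ℂ)) 0 := by
      refine ContinuousAt.cpow ?_ continuousAt_const (by simp)
      exact ((by fun_prop : Continuous fun u : ℝ => 1 + u * I).continuousAt).inv₀ (by simp)
    simpa using this.tendsto.mono_left nhdsWithin_le_nhds
  have hC : Tendsto (fun u : ℝ => jacobiTheta₂ 0 (-1 / (2 * K) + I / (2 * K * u))) (𝓝[>] 0)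
      (𝓝 1) := by
    simpa [Function.comp_def] using (tendsto_jacobiTheta₂_comap_im_atTop 0).comp
      (tendsto_add_I_div_mul_nhdsGT_zero (-1 / (2 * K)) hK')
  have hlim := ((hA.inv₀ (by simp [cpow_eq_zero_iff, hK])).mul (hB.inv₀ one_ne_zero)).mul hC
  rw [inv_one, mul_one, mul_one, show (-I / (2 * K) : ℂ) = -I / ((2 * K : ℝ) : ℂ) by push_cast; rfl,
    inv_cpow_half_neg_I_div hK'] at hlim
  refine hlim.congr' ?_
  filter_upwards [self_mem_nhdsWithin] with u hu
  exact (scaledTheta_eq_mul_jacobiTheta₂ hK hu).symm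

theorem gauss_sum_eq_fresnel_general (K : ℕ) :
    ∑ β ∈ Finset.Icc (-(K : ℤ)) ((K : ℤ) - 1),
      Complex.exp (Complex.I * π * (β : ℂ) ^ 2 / (2 * K)) =
      (Real.sqrt (2 * K) : ℂ) * Complex.exp (Complex.I * π / 4) := by
  rcases eq_or_ne K 0 with rfl | hK
  · simp
  rw [Finset.Icc_sub_one_right_eq_Ico]
  exact tendsto_nhds_unique (tendsto_scaledTheta_sum hK) (tendsto_scaledTheta_sqrt_mul_exp hK)

/-- For an odd prime `K`, the quadratic Gauss-type sum
`∑_{β=-K}^{K-1} exp(iπβ²/(2K))` equals the Fresnel integral value `√(2K)·e^{iπ/4}`. -/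
theorem gauss_sum_eq_fresnel (K : ℕ) (hK : K.Prime) (hodd : Odd K) :
    ∑ β ∈ Finset.Icc (-(K : ℤ)) ((K : ℤ) - 1),
      Complex.exp (Complex.I * π * (β : ℂ) ^ 2 / (2 * K)) =
      (Real.sqrt (2 * K) : ℂ) * Complex.exp (Complex.I * π / 4) :=
  gauss_sum_eq_fresnel_general K
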